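/- Suppose G acts by isomorphisms on a locally compact groupoid H carrying an invariant Haar system {λ_H^v}, i.e. ∫ f(x·t) dλ_H^v(t) = ∫ f(t) dλ_H^{x·v}(t) for all f ∈ C_c(H), x ∈ G, v ∈ H⁽⁰⁾ with ρ(v) = s(x), and G has a Haar system {λ_G^w}. Then the family λ^{(v,w)} defined by ∫ F d λ^{(v,w)} = ∫_G ∫_H F(t,x) dλ_H^v(t) dλ_G^w(x) is left-invariant on the semidirect product H ⋊ G: for all F ∈ C_c(H ⋊ G) and γ = (t,x) ∈ H ⋊ G, ∫ F(γ·η) dλ^{s(γ)}(η) = ∫ F(η) dλ^{r(γ)}(η). -/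
import Mathlib


/-- A one-sorted groupoid structure on a type `A`: units are encoded as the images of
the source and range maps, and multiplication is defined on composable pairs. -/
structure GroupoidStruct (A : Type*) where
  src : A → A
  rng : A → A
  mul : (a b : A) → src a = rng b → A
  inv : A → A
  src_mul : ∀ a b (h : src a = rng b), src (mul a b h) = src b
  rng_mul : ∀ a b (h : src a = rng b), rng (mul a b h) = rng a
  src_inv : ∀ a, src (inv a) = rng a
  rng_inv : ∀ a, rng (inv a) = src a
  src_src : ∀ a, src (src a) = src a
  rng_src : ∀ a, rng (src a) = src a
  src_rng : ∀ a, src (rng a) = rng a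
  rng_rng : ∀ a, rng (rng a) = rng a
  mul_assoc' : ∀ a b c (hab : src a = rng b) (hbc : src b = rng c),
    mul (mul a b hab) c ((src_mul a b hab).trans hbc) =
      mul a (mul b c hbc) (hab.trans (rng_mul b c hbc).symm)
  rng_mul_self : ∀ a, mul (rng a) a (src_rng a) = a
  mul_src_self : ∀ a, mul a (src a) (rng_src a).symm = a
  mul_inv_self : ∀ a, mul a (inv a) (rng_inv a).symm = rng a
  inv_mul_self : ∀ a, mul (inv a) a (src_inv a) = src a

/-- A left action of a groupoid `𝒢` on a type `T`, with moment map `ρ` taking values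
in the units of `𝒢`; `act x t` is defined when `src x = ρ t`. -/
structure ActionStruct {G : Type*} (𝒢 : GroupoidStruct G) (T : Type*) where
  ρ : T → G
  ρ_unit : ∀ t, 𝒢.src (ρ t) = ρ t
  act : (x : G) → (t : T) → 𝒢.src x = ρ t → T
  ρ_act : ∀ x t (h : 𝒢.src x = ρ t), ρ (act x t h) = 𝒢.rng x
  act_unit : ∀ t, act (ρ t) t (ρ_unit t) = t
  act_mul : ∀ x y t (hyt : 𝒢.src y = ρ t) (hxy : 𝒢.src x = 𝒢.rng y),
    act (𝒢.mul x y hxy) t ((𝒢.src_mul x y hxy).trans hyt) =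
      act x (act y t hyt) (hxy.trans (ρ_act y t hyt).symm)
/-- An action of a groupoid `𝒢` on (the underlying space of) a groupoid `ℋ` is *by
isomorphisms* if the moment map `ρ` is a groupoid bundle (each fiber is a
subgroupoid) and for each `x` the map `h ↦ x·h : H_{s x} → H_{r x}` is a groupoid
isomorphism, i.e. a bijection preserving composability and multiplication. -/
structure ActsByIso {G H : Type*} (𝒢 : GroupoidStruct G) (ℋ : GroupoidStruct H)
    (A : ActionStruct 𝒢 H) : Prop where
  ρ_src : ∀ h, A.ρ (ℋ.src h) = A.ρ h
  ρ_rng : ∀ h, A.ρ (ℋ.rng h) = A.ρ h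
  ρ_inv : ∀ h, A.ρ (ℋ.inv h) = A.ρ h
  ρ_mul : ∀ h k (c : ℋ.src h = ℋ.rng k), A.ρ (ℋ.mul h k c) = A.ρ h
  act_comp : ∀ x h k (hx : 𝒢.src x = A.ρ h) (hk : 𝒢.src x = A.ρ k),
    (ℋ.src h = ℋ.rng k ↔ ℋ.src (A.act x h hx) = ℋ.rng (A.act x k hk))
  act_mulH : ∀ x h k (hx : 𝒢.src x = A.ρ h) (hk : 𝒢.src x = A.ρ k)
    (c : ℋ.src h = ℋ.rng k)
    (c' : ℋ.src (A.act x h hx) = ℋ.rng (A.act x k hk))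
    (hm : 𝒢.src x = A.ρ (ℋ.mul h k c)),
    A.act x (ℋ.mul h k c) hm = ℋ.mul (A.act x h hx) (A.act x k hk) c'
  act_inj : ∀ x h k (hx : 𝒢.src x = A.ρ h) (hk : 𝒢.src x = A.ρ k),
    A.act x h hx = A.act x k hk → h = k
  act_surj : ∀ x k, A.ρ k = 𝒢.rng x → ∃ h, ∃ hx : 𝒢.src x = A.ρ h, A.act x h hx = k

open MeasureTheory

variable {G H : Type*} [MeasurableSpace G] [MeasurableSpace H]
  (𝒢 : GroupoidStruct G) (ℋ : GroupoidStruct H) (A : ActionStruct 𝒢 H)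

open Classical in
/-- Groupoid multiplication, extended to a totally defined map. -/
noncomputable def tMul {K : Type*} (𝒦 : GroupoidStruct K) (a b : K) : K :=
  if c : 𝒦.src a = 𝒦.rng b then 𝒦.mul a b c else a

open Classical in
/-- The action of `x` on `h`, extended to a totally defined map. -/
noncomputable def tActH (x : G) (h : H) : H :=
  if c : 𝒢.src x = A.ρ h then A.act x h c else h

lemma mul_congr {K : Type*} (𝒦 : GroupoidStruct K) {a a' b b' : K}
    (ha : a = a') (hb : b = b') {h : 𝒦.src a = 𝒦.rng b} {h' : 𝒦.src a' = 𝒦.rng b'} :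
    𝒦.mul a b h = 𝒦.mul a' b' h' := by subst ha; subst hb; rfl

lemma act_congr {G H : Type*} {𝒢 : GroupoidStruct G} (A : ActionStruct 𝒢 H)
    {x x' : G} {t t' : H} (hx : x = x') (ht : t = t')
    {h : 𝒢.src x = A.ρ t} {h' : 𝒢.src x' = A.ρ t'} :
    A.act x t h = A.act x' t' h' := by subst hx; subst ht; rfl

lemma unit_of_idem {K : Type*} (𝒦 : GroupoidStruct K) {a : K}
    (c : 𝒦.src a = 𝒦.rng a) (h : 𝒦.mul a a c = a) : 𝒦.src a = a := by
  have h1 : 𝒦.mul (𝒦.inv a) (𝒦.mul a a c) ((𝒦.src_inv a).trans (𝒦.rng_mul a a c).symm)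
      = 𝒦.mul (𝒦.inv a) a (𝒦.src_inv a) := mul_congr 𝒦 rfl h
  rw [𝒦.inv_mul_self] at h1
  rw [← h1, ← 𝒦.mul_assoc' (𝒦.inv a) a a (𝒦.src_inv a) c]
  have h2 : 𝒦.mul (𝒦.mul (𝒦.inv a) a (𝒦.src_inv a)) a
      ((𝒦.src_mul (𝒦.inv a) a (𝒦.src_inv a)).trans c) = a := by
    have : 𝒦.mul (𝒦.mul (𝒦.inv a) a (𝒦.src_inv a)) a
        ((𝒦.src_mul (𝒦.inv a) a (𝒦.src_inv a)).trans c)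
        = 𝒦.mul (𝒦.rng a) a (𝒦.src_rng a) :=
      mul_congr 𝒦 ((𝒦.inv_mul_self a).trans c) rfl
    rw [this, 𝒦.rng_mul_self]
  rw [h2]

/-- **Haar system on the semidirect product.**  Suppose `G` acts by isomorphisms on
`H`, `lam_H` is a `G`-invariant Haar system on `H` and `lam_G` is a Haar system on `G`.
Then the family `λ^{(v,w)} = λ_H^v × λ_G^w` is left-invariant on `H ⋊ G`: for every
`F` and every `γ = (t,x) ∈ H ⋊ G`,
`∫ F(γ·η) dλ^{s γ}(η) = ∫ F(η) dλ^{r γ}(η)`. -/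
theorem semidirect_product_haar_system
    (I : ActsByIso 𝒢 ℋ A)
    (lamH : H → Measure H) (lamG : G → Measure G)
    (hsuppH : ∀ v, ℋ.src v = v → ∀ᵐ u ∂(lamH v), ℋ.rng u = v)
    (hsuppG : ∀ w, 𝒢.src w = w → ∀ᵐ y ∂(lamG w), 𝒢.rng y = w)
    (hHaarH : ∀ (t : H) (f : H → ℝ),
      ∫ u, f (tMul ℋ t u) ∂(lamH (ℋ.src t)) = ∫ u, f u ∂(lamH (ℋ.rng t)))
    (hHaarG : ∀ (x : G) (g : G → ℝ),
      ∫ y, g (tMul 𝒢 x y) ∂(lamG (𝒢.src x)) = ∫ y, g y ∂(lamG (𝒢.rng x)))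
    (hInv : ∀ (x : G) (v : H) (hx : 𝒢.src x = A.ρ v), ℋ.src v = v →
      ∀ f : H → ℝ,
        ∫ u, f (tActH 𝒢 A x u) ∂(lamH v) = ∫ u, f u ∂(lamH (A.act x v hx))) :
    ∀ (F : H × G → ℝ) (γ : {p : H × G // A.ρ p.1 = 𝒢.rng p.2}),
      (∫ y, ∫ u, F (tMul ℋ γ.1.1 (tActH 𝒢 A γ.1.2 u), tMul 𝒢 γ.1.2 y)
          ∂(lamH (tActH 𝒢 A (𝒢.inv γ.1.2) (ℋ.src γ.1.1))) ∂(lamG (𝒢.src γ.1.2))) =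
      ∫ y, ∫ u, F (u, y) ∂(lamH (ℋ.rng γ.1.1)) ∂(lamG (𝒢.rng γ.1.2)) := by
  rintro F ⟨⟨t, x⟩, hγ⟩
  dsimp only
  -- the unit `v₀ = x⁻¹ · src t`
  have hx' : 𝒢.src (𝒢.inv x) = A.ρ (ℋ.src t) := by
    rw [𝒢.src_inv, I.ρ_src]; exact hγ.symm
  have hv0 : tActH 𝒢 A (𝒢.inv x) (ℋ.src t) = A.act (𝒢.inv x) (ℋ.src t) hx' :=
    dif_pos hx'
  set v₀ := A.act (𝒢.inv x) (ℋ.src t) hx' with hv₀def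
  have hρv₀ : A.ρ v₀ = 𝒢.src x := by rw [hv₀def, A.ρ_act, 𝒢.rng_inv]
  have hxv : 𝒢.src x = A.ρ v₀ := hρv₀.symm
  -- `src t` is idempotent, hence so is `v₀`, hence `v₀` is a unit
  have hu_src : ℋ.src (ℋ.src t) = ℋ.src t := ℋ.src_src t
  have hu_rng : ℋ.rng (ℋ.src t) = ℋ.src t := ℋ.rng_src t
  have cu : ℋ.src (ℋ.src t) = ℋ.rng (ℋ.src t) := hu_src.trans hu_rng.symm
  have huu : ℋ.mul (ℋ.src t) (ℋ.src t) cu = ℋ.src t :=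
    (mul_congr ℋ rfl hu_src.symm).trans (ℋ.mul_src_self (ℋ.src t))
  have hρuu : 𝒢.src (𝒢.inv x) = A.ρ (ℋ.mul (ℋ.src t) (ℋ.src t) cu) := by
    rw [I.ρ_mul]; exact hx'
  have cv : ℋ.src v₀ = ℋ.rng v₀ := (I.act_comp (𝒢.inv x) _ _ hx' hx').mp cu
  have hvv : ℋ.mul v₀ v₀ cv = v₀ := by
    have h1 := I.act_mulH (𝒢.inv x) (ℋ.src t) (ℋ.src t) hx' hx' cu cv hρuu
    rw [← h1, hv₀def]
    exact act_congr A rfl huu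
  have hunit : ℋ.src v₀ = v₀ := unit_of_idem ℋ cv hvv
  -- `x · v₀ = src t`
  have hxinv : 𝒢.src x = 𝒢.rng (𝒢.inv x) := (𝒢.rng_inv x).symm
  have hact : A.act x v₀ hxv = ℋ.src t := by
    have h1 := A.act_mul x (𝒢.inv x) (ℋ.src t) hx' hxinv
    have h2 : A.act (𝒢.mul x (𝒢.inv x) hxinv) (ℋ.src t)
        ((𝒢.src_mul x (𝒢.inv x) hxinv).trans hx') = ℋ.src t := by
      have h3 : A.act (𝒢.mul x (𝒢.inv x) hxinv) (ℋ.src t)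
          ((𝒢.src_mul x (𝒢.inv x) hxinv).trans hx')
          = A.act (A.ρ (ℋ.src t)) (ℋ.src t) (A.ρ_unit (ℋ.src t)) := by
        refine act_congr A ?_ rfl
        rw [𝒢.mul_inv_self, I.ρ_src, hγ]
      rw [h3, A.act_unit]
    rw [← h2, h1]
  -- inner integral
  have step : ∀ y : G,
      (∫ u, F (tMul ℋ t (tActH 𝒢 A x u), tMul 𝒢 x y) ∂(lamH v₀))
        = ∫ u, F (u, tMul 𝒢 x y) ∂(lamH (ℋ.rng t)) := by
    intro y
    have h1 := hInv x v₀ hxv hunit (fun u => F (tMul ℋ t u, tMul 𝒢 x y))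
    rw [hact] at h1
    rw [h1]
    exact hHaarH t (fun u => F (u, tMul 𝒢 x y))
  rw [hv0]
  calc (∫ y, ∫ u, F (tMul ℋ t (tActH 𝒢 A x u), tMul 𝒢 x y) ∂(lamH v₀)
          ∂(lamG (𝒢.src x)))
      = ∫ y, (fun z => ∫ u, F (u, z) ∂(lamH (ℋ.rng t))) (tMul 𝒢 x y)
          ∂(lamG (𝒢.src x)) := by
        exact integral_congr_ae (Filter.Eventually.of_forall fun y => step y)
    _ = ∫ y, ∫ u, F (u, y) ∂(lamH (ℋ.rng t)) ∂(lamG (𝒢.rng x)) :=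
        hHaarG x (fun z => ∫ u, F (u, z) ∂(lamH (ℋ.rng t)))
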